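/- arXiv:2212.09470 — 2 statements merged into one kernel-verified Lean document; each statement's English description precedes it below -/
import Mathlib

section
/- For integers a, b, c with b ≠ 0 (and all signs b_{j} ∈ {1,-1}), the product of three continued-fraction layer matrices (0 b1; 1 a)·(0 b2; 1 0)·(0 b3; 1 c) acts as a Möbius transformation identically to the single layer matrix (0 b1·b2·b3; 1 c + b2·b3·a); i.e., the two matrices are equal up to a nonzero scalar multiple. -/
open Matrix

theorem layer_mul_zeroLayer_mul_layer {R : Type*} [CommRing R] (a c b₁ b₂ b₃ : R) :
    !![0, b₁; 1, a] * !![0, b₂; 1, 0] * !![0, b₃; 1, c] =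
      !![0, b₁ * b₃; b₂, a * b₃ + b₂ * c] := by
  ext i j; fin_cases i <;> fin_cases j <;> simp [Matrix.mul_apply, Fin.sum_univ_succ]

theorem layer_mul_zeroLayer_mul_layer_eq_smul {R : Type*} [CommRing R] (a c b₁ b₂ b₃ : R)
    (hb₂ : b₂ * b₂ = 1) :
    !![0, b₁; 1, a] * !![0, b₂; 1, 0] * !![0, b₃; 1, c] =
      b₂ • !![0, b₁ * b₂ * b₃; 1, c + b₂ * b₃ * a] := by
  rw [layer_mul_zeroLayer_mul_layer]
  ext i j; fin_cases i <;> fin_cases j <;> simp <;> grind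

theorem stmt_1_general (a c : ℤ) (b₁ b₂ b₃ : ℤ)
    (hb₂ : b₂ = 1 ∨ b₂ = -1) :
    ∃ k : ℤ, k ≠ 0 ∧
      (!![0, b₁; 1, a] : Matrix (Fin 2) (Fin 2) ℤ) * !![0, b₂; 1, 0] * !![0, b₃; 1, c] =
        k • !![0, b₁ * b₂ * b₃; 1, c + b₂ * b₃ * a] := by
  have hb₂_sq : b₂ * b₂ = 1 := mul_self_eq_one_iff.mpr hb₂
  exact ⟨b₂, left_ne_zero_of_mul_eq_one hb₂_sq,
    layer_mul_zeroLayer_mul_layer_eq_smul a c b₁ b₂ b₃ hb₂_sq⟩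

theorem stmt_1 (a c : ℤ) (b₁ b₂ b₃ : ℤ)
    (hb₁ : b₁ = 1 ∨ b₁ = -1) (hb₂ : b₂ = 1 ∨ b₂ = -1) (hb₃ : b₃ = 1 ∨ b₃ = -1) :
    ∃ k : ℤ, k ≠ 0 ∧
      (!![0, b₁; 1, a] : Matrix (Fin 2) (Fin 2) ℤ) * !![0, b₂; 1, 0] * !![0, b₃; 1, c] =
        k • !![0, b₁ * b₂ * b₃; 1, c + b₂ * b₃ * a] :=
  stmt_1_general a c b₁ b₂ b₃ hb₂
end

section
/- If a 2×2 real matrix M has a pair of non-real complex conjugate eigenvalues λ, λ̄ with λ not real and λ/|λ| not a root of unity equal to 1 (i.e., the rotation angle θ ≠ 0 mod 2π), then the sequence of Möbius iterates M^k(0) does not converge in ℝ, unless it is eventually constant rational. -/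
/-!
Since the characteristic polynomial of `M` has the non-real root `lam`, it has no real root, so
`M` has no real eigenvector. If a limit `L` of `x k = (M ^ k) 0 1 / (M ^ k) 1 1` existed with the
denominators eventually nonzero, passing to the limit in `x (k + 1) = (a x k + b) / (c x k + d)`
would make `L` a fixed point of the Möbius map, i.e. `(L, 1)` an eigenvector of `M`.
A denominator can vanish twice only if some power `M ^ n` has an eigenvector; as every power is
`p • M + q • 1`, that forces `M ^ n` to be scalar. Then `x` is `n`-periodic, so it converges only
if it is constant, equal to `x 0 = 0`; this does happen for a quarter turn, whose orbit
`0, ∞, 0, ∞, …` reads as `0` because `b / 0 = 0`.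
-/

open Matrix Filter

theorem Function.Periodic.eq_of_tendsto_atTop {α : Type*} [TopologicalSpace α] [T2Space α]
    {f : ℕ → α} {n : ℕ} (hf : Function.Periodic f n) (hn : 0 < n) {L : α}
    (hL : Tendsto f atTop (nhds L)) (k : ℕ) : f k = L := by
  have hsub : Tendsto (fun m : ℕ => k + m * n) atTop atTop :=
    tendsto_atTop_mono (fun m => le_add_left (Nat.le_mul_of_pos_right m hn)) tendsto_id
  refine tendsto_nhds_unique tendsto_const_nhds ((hL.comp hsub).congr fun m => ?_)
  simpa [add_comm] using (hf.nat_mul m k)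

namespace Matrix

section CommRing

variable {R : Type*} [CommRing R]

theorem mul_self_fin_two (M : Matrix (Fin 2) (Fin 2) R) :
    M * M = M.trace • M - M.det • 1 := by
  nontriviality R
  have h := M.aeval_self_charpoly
  rw [charpoly_fin_two] at h
  simp only [map_add, map_sub, map_mul, map_pow, Polynomial.aeval_X, Polynomial.aeval_C,
    Algebra.algebraMap_eq_smul_one] at h
  rw [sq] at h
  rw [← sub_eq_zero, ← h]
  simp only [smul_mul_assoc, one_mul]
  abel

theorem exists_pow_eq_smul_add_smul_one (M : Matrix (Fin 2) (Fin 2) R) (n : ℕ) :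
    ∃ p q : R, M ^ n = p • M + q • 1 := by
  induction n with
  | zero => exact ⟨0, 1, by simp⟩
  | succ n ih =>
    obtain ⟨p, q, h⟩ := ih
    refine ⟨M.trace * p + q, -(M.det * p), ?_⟩
    rw [pow_succ, h, add_mul, smul_mul_assoc, mul_self_fin_two, smul_mul_assoc, one_mul]
    module

end CommRing

section Field

variable {K : Type*} [Field K]

theorem sq_sub_trace_mul_add_det_eq_zero_of_mulVec_eq_smul {M : Matrix (Fin 2) (Fin 2) K}
    {v : Fin 2 → K} (hv : v ≠ 0) {μ : K} (h : M *ᵥ v = μ • v) :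
    μ ^ 2 - M.trace * μ + M.det = 0 := by
  have h2 := congrArg (· *ᵥ v) M.mul_self_fin_two
  simp only [← mulVec_mulVec, h, mulVec_smul, sub_mulVec, smul_mulVec, one_mulVec] at h2
  rw [← sub_eq_zero] at h2
  have : (μ ^ 2 - M.trace * μ + M.det) • v = 0 := by
    rw [← h2]; simp only [sub_smul, add_smul, smul_smul]; module
  exact (smul_eq_zero.mp this).resolve_right hv

/-- Writing `M ^ n = p • M + q • 1`, an eigenvector of `M ^ n` is one of `M` unless `p = 0`. -/
theorem pow_eq_smul_one_of_mulVec_eq_smul {M : Matrix (Fin 2) (Fin 2) K}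
    (hM : ∀ (v : Fin 2 → K) (μ : K), M *ᵥ v = μ • v → v = 0) {n : ℕ} {v : Fin 2 → K}
    (hv : v ≠ 0) {μ : K} (h : M ^ n *ᵥ v = μ • v) : M ^ n = μ • 1 := by
  obtain ⟨p, q, hpq⟩ := M.exists_pow_eq_smul_add_smul_one n
  rw [hpq, add_mulVec, smul_mulVec, smul_mulVec, one_mulVec] at h
  have hp : p = 0 := by
    by_contra hp
    refine hv (hM v (p⁻¹ * (μ - q)) ?_)
    rw [mul_smul, sub_smul, ← h, add_sub_cancel_right, smul_smul,
      inv_mul_cancel₀ hp, one_smul]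
  rw [hp, zero_smul, zero_add] at h
  rw [hpq, hp, zero_smul, zero_add, (smul_left_injective K hv) h]

theorem det_ne_zero_of_forall_mulVec_eq_smul {ι : Type*} [Fintype ι] [DecidableEq ι]
    {M : Matrix ι ι K} (hM : ∀ (v : ι → K) (μ : K), M *ᵥ v = μ • v → v = 0) : M.det ≠ 0 := by
  intro hdet
  obtain ⟨v, hv, hMv⟩ := exists_mulVec_eq_zero_iff.mpr hdet
  exact hv (hM v 0 (by rw [hMv, zero_smul]))

/-- The second columns of `M ^ j` and `M ^ k` both lie on the line of the first basis vector,
which is therefore an eigenvector of `M ^ (k - j)`. -/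
theorem exists_pow_eq_smul_one_of_pow_apply_eq_zero {M : Matrix (Fin 2) (Fin 2) K}
    (hM : ∀ (v : Fin 2 → K) (μ : K), M *ᵥ v = μ • v → v = 0) {j k : ℕ} (hjk : j ≤ k)
    (hj : (M ^ j) 1 1 = 0) (hk : (M ^ k) 1 1 = 0) : ∃ q : K, M ^ (k - j) = q • 1 := by
  have hcol : ∀ m, (M ^ m) 1 1 = 0 → M ^ m *ᵥ Pi.single 1 1 = (M ^ m) 0 1 • Pi.single 0 1 := by
    intro m hm
    ext i; fin_cases i <;> simp [mulVec_single, hm]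
  have huj : (M ^ j) 0 1 ≠ 0 := by
    intro h
    apply pow_ne_zero j (det_ne_zero_of_forall_mulVec_eq_smul hM)
    rw [← det_pow, det_fin_two, h, hj, mul_zero, zero_mul, sub_zero]
  refine ⟨(M ^ k) 0 1 / (M ^ j) 0 1,
    pow_eq_smul_one_of_mulVec_eq_smul hM (v := Pi.single 0 1)
    (Pi.single_ne_zero_iff.mpr one_ne_zero) ?_⟩
  have h := congrArg (M ^ (k - j) *ᵥ ·) (hcol j hj)
  simp only [mulVec_mulVec, ← pow_add, Nat.sub_add_cancel hjk, hcol k hk, mulVec_smul] at h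
  rw [div_eq_inv_mul, mul_smul, h, smul_smul, inv_mul_cancel₀ huj, one_smul]

theorem eventually_pow_apply_ne_zero {M : Matrix (Fin 2) (Fin 2) K}
    (hM : ∀ (v : Fin 2 → K) (μ : K), M *ᵥ v = μ • v → v = 0)
    (hnot : ∀ n, 0 < n → ∀ q : K, M ^ n ≠ q • 1) : ∀ᶠ k in atTop, (M ^ k) 1 1 ≠ 0 := by
  by_cases h : ∃ j, (M ^ j) 1 1 = 0
  · obtain ⟨j, hj⟩ := h
    filter_upwards [eventually_gt_atTop j] with k hjk hk
    obtain ⟨q, hq⟩ := exists_pow_eq_smul_one_of_pow_apply_eq_zero hM hjk.le hj hk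
    exact hnot (k - j) (Nat.sub_pos_of_lt hjk) q hq
  · push Not at h
    exact Eventually.of_forall h

theorem periodic_pow_apply_div_of_pow_eq_smul_one {ι : Type*} [Fintype ι] [DecidableEq ι]
    {M : Matrix ι ι K} {n : ℕ} {q : K} (hq : q ≠ 0) (hMn : M ^ n = q • 1) (i j i' j' : ι) :
    Function.Periodic (fun k : ℕ => (M ^ k) i j / (M ^ k) i' j') n := by
  intro k
  simp only [pow_add, hMn, Matrix.mul_smul, Matrix.mul_one, smul_apply, smul_eq_mul]
  exact mul_div_mul_left _ _ hq

end Field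

theorem eq_zero_of_mulVec_eq_smul_of_root_im_ne_zero {M : Matrix (Fin 2) (Fin 2) ℝ}
    {lam : ℂ} (hroot : lam ^ 2 - (M.trace : ℂ) * lam + (M.det : ℂ) = 0) (him : lam.im ≠ 0)
    (v : Fin 2 → ℝ) (μ : ℝ) (h : M *ᵥ v = μ • v) : v = 0 := by
  by_contra hv
  have hμ : ((μ ^ 2 - M.trace * μ + M.det : ℝ) : ℂ) = 0 := by
    rw [sq_sub_trace_mul_add_det_eq_zero_of_mulVec_eq_smul hv h, Complex.ofReal_zero]
  push_cast at hμ
  have hfac : (lam - μ) * (lam + μ - M.trace) = 0 := by linear_combination hroot - hμ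
  rcases mul_eq_zero.mp hfac with h | h
  · exact him (by simpa using congrArg Complex.im (sub_eq_zero.mp h))
  · exact him (by simpa using congrArg Complex.im h)

/-- A limit of the orbit of `0` under the Möbius map of `M` is a fixed point of that map,
i.e. `(L, 1)` is an eigenvector of `M`. -/
theorem mulVec_eq_smul_of_tendsto_pow_apply_div (M : Matrix (Fin 2) (Fin 2) ℝ) {L : ℝ}
    (hden : ∀ᶠ k in atTop, (M ^ k) 1 1 ≠ 0)
    (hL : Tendsto (fun k : ℕ => (M ^ k) 0 1 / (M ^ k) 1 1) atTop (nhds L)) :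
    M *ᵥ ![L, 1] = (M 1 0 * L + M 1 1) • ![L, 1] := by
  set x := fun k : ℕ => (M ^ k) 0 1 / (M ^ k) 1 1
  have hstep : ∀ᶠ k in atTop, x (k + 1) * (M 1 0 * x k + M 1 1) = M 0 0 * x k + M 0 1 := by
    filter_upwards [hden, (tendsto_add_atTop_nat 1).eventually hden] with k hk hk1
    simp only [x, pow_succ', mul_apply, Fin.sum_univ_two] at hk1 ⊢
    rw [div_mul_eq_mul_div, div_eq_iff hk1]
    field_simp
  have hfix : L * (M 1 0 * L + M 1 1) = M 0 0 * L + M 0 1 :=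
    tendsto_nhds_unique_of_eventuallyEq
      (((tendsto_add_atTop_iff_nat 1).mpr hL).mul ((hL.const_mul _).add_const _))
      ((hL.const_mul _).add_const _) hstep
  ext i; fin_cases i
  · simp [mulVec, dotProduct, Fin.sum_univ_two]; linarith
  · simp [mulVec, dotProduct, Fin.sum_univ_two]

end Matrix

theorem stmt_10 (M : Matrix (Fin 2) (Fin 2) ℝ) (lam : ℂ)
    (hroot : lam ^ 2 - (M.trace : ℂ) * lam + (M.det : ℂ) = 0)
    (him : lam.im ≠ 0) :
    ∀ L : ℝ,
      Tendsto (fun k : ℕ => ((M ^ k) 0 1) / ((M ^ k) 1 1)) atTop (nhds L) →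
        ∃ r : ℚ, L = (r : ℝ) ∧
          ∀ᶠ k : ℕ in atTop, ((M ^ k) 0 1) / ((M ^ k) 1 1) = L := by
  intro L hL
  have hM := M.eq_zero_of_mulVec_eq_smul_of_root_im_ne_zero hroot him
  by_cases hscalar : ∃ n, 0 < n ∧ ∃ q : ℝ, M ^ n = q • 1
  · obtain ⟨n, hn, q, hq⟩ := hscalar
    have hq0 : q ≠ 0 := by
      rintro rfl
      apply pow_ne_zero n (det_ne_zero_of_forall_mulVec_eq_smul hM)
      rw [← det_pow, hq, zero_smul, det_zero]
    have hconst := (periodic_pow_apply_div_of_pow_eq_smul_one hq0 hq 0 1 1 1).eq_of_tendsto_atTop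
      hn hL
    refine ⟨0, ?_, Eventually.of_forall hconst⟩
    simpa using (hconst 0).symm
  · push Not at hscalar
    have hfix := M.mulVec_eq_smul_of_tendsto_pow_apply_div
      (eventually_pow_apply_ne_zero hM hscalar) hL
    simpa using congrFun (hM _ _ hfix) 1
end
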